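/- Let $n, r, t, x$ be positive integers with $x \geq 1$, and suppose that for every $i \in [n]$ there are given sets $R_i^1, \dots, R_i^t \subseteq [n] \setminus \{i\}$, each of cardinality $r$, with any two distinct sets among $R_i^1,\dots,R_i^t$ intersecting in at most $x$ elements. Then there exists a subset $U \subseteq [n]$ with $|U| \geq n \cdot f(r,t,x)$ such that for every nonempty subset $U' \subseteq U$ there exist a vertex $v \in U'$ and a color $j \in [t]$ with $R_v^j \cap U' = \emptyset$. -/

import Mathlib

/-- The parameter `s = min {j, ⌊r/x⌋ + 1}`. -/
def sPar (r j x : ℕ) : ℕ := min j (r / x + 1)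

/-- The lower bound `N̲(r,j,x) = (2r - (s-1)x)·s / 2`. -/
def Nlow (r j x : ℕ) : ℚ :=
  ((2 * r : ℚ) - ((sPar r j x : ℚ) - 1) * x) * (sPar r j x : ℚ) / 2

/-- The upper bound `N̄(r,j,x) = j·r`. -/
def Nbar (r j x : ℕ) : ℕ := j * r

/-- `f(r,t,x) = ∑_{j odd} C(t,j)/(N̄(r,j,x)+1) - ∑_{j even} C(t,j)/(N̲(r,j,x)+1)`. -/
def fLRC (r t x : ℕ) : ℚ :=
  (∑ j ∈ Finset.Icc 1 t,
      if Odd j then (t.choose j : ℚ) / ((Nbar r j x : ℚ) + 1) else 0)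
  - (∑ j ∈ Finset.Icc 1 t,
      if Even j then (t.choose j : ℚ) / (Nlow r j x + 1) else 0)

open Finset

/-! ### Auxiliary lemmas -/

variable {n t : ℕ}

/-- Event: all of `B` comes before `i` under the permutation `π`. -/
def Ev (i : Fin n) (B : Finset (Fin n)) : Finset (Equiv.Perm (Fin n)) :=
  Finset.univ.filter (fun π => ∀ m ∈ B, π m < π i)

/-- `π a` is the strict max of `π` over `C`. -/
def Fv (C : Finset (Fin n)) (a : Fin n) : Finset (Equiv.Perm (Fin n)) :=
  Finset.univ.filter (fun π => ∀ m ∈ C, m ≠ a → π m < π a)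

lemma Fv_card_eq (C : Finset (Fin n)) {a b : Fin n} (ha : a ∈ C) (hb : b ∈ C) :
    (Fv C a).card = (Fv C b).card := by
  apply Finset.card_bij' (fun π _ => π * Equiv.swap a b) (fun π _ => π * Equiv.swap a b)
  · intro π hπ
    simp only [Fv, mem_filter, mem_univ, true_and] at hπ ⊢
    intro m hm hmb
    rcases eq_or_ne m a with rfl | hma
    · simpa [Equiv.swap_apply_left, Equiv.swap_apply_right] using hπ b hb (Ne.symm hmb)
    · simp only [Equiv.Perm.mul_apply, Equiv.swap_apply_of_ne_of_ne hma hmb,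
        Equiv.swap_apply_right]
      exact hπ m hm hma
  · intro π hπ
    simp only [Fv, mem_filter, mem_univ, true_and] at hπ ⊢
    intro m hm hma
    rcases eq_or_ne m b with rfl | hmb
    · simpa [Equiv.swap_apply_left, Equiv.swap_apply_right] using hπ a ha (Ne.symm hma)
    · simp only [Equiv.Perm.mul_apply, Equiv.swap_apply_of_ne_of_ne hma hmb,
        Equiv.swap_apply_left]
      exact hπ m hm hmb
  · intro π _; simp [mul_assoc]
  · intro π _; simp [mul_assoc]

lemma Ev_card_mul (i : Fin n) (B : Finset (Fin n)) (hi : i ∉ B) :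
    (Ev i B).card * (B.card + 1) = Nat.factorial n := by
  classical
  set C : Finset (Fin n) := insert i B with hC
  have hiC : i ∈ C := mem_insert_self _ _
  have hEv : Ev i B = Fv C i := by
    ext π
    simp only [Ev, Fv, mem_filter, mem_univ, true_and, hC, mem_insert]
    constructor
    · rintro h m (rfl | hm) hmi
      · exact absurd rfl hmi
      · exact h m hm
    · intro h m hm
      exact h m (Or.inr hm) (fun hmi => hi (hmi ▸ hm))
  have hcover : (Finset.univ : Finset (Equiv.Perm (Fin n))) = C.biUnion (Fv C) := by
    ext π
    simp only [mem_univ, mem_biUnion, true_iff]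
    obtain ⟨a, haC, hmax⟩ := C.exists_max_image π ⟨i, hiC⟩
    refine ⟨a, haC, ?_⟩
    simp only [Fv, mem_filter, mem_univ, true_and]
    intro m hm hma
    exact lt_of_le_of_ne (hmax m hm) (fun h => hma (π.injective h))
  have hdisj : ∀ a ∈ C, ∀ b ∈ C, a ≠ b → Disjoint (Fv C a) (Fv C b) := by
    intro a ha b hb hab
    rw [Finset.disjoint_left]
    intro π hπa hπb
    simp only [Fv, mem_filter, mem_univ, true_and] at hπa hπb
    exact absurd (hπa b hb (Ne.symm hab)) (not_lt.2 (le_of_lt (hπb a ha hab)))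
  have hcard : Nat.factorial n = ∑ a ∈ C, (Fv C a).card := by
    rw [← Finset.card_biUnion hdisj, ← hcover, Finset.card_univ, Fintype.card_perm,
      Fintype.card_fin]
  have hconst : ∑ a ∈ C, (Fv C a).card = C.card * (Fv C i).card := by
    rw [Finset.sum_congr rfl (fun a ha => Fv_card_eq C ha hiC), Finset.sum_const, smul_eq_mul]
  rw [hEv, mul_comm]
  rw [hcard, hconst, hC, Finset.card_insert_of_notMem hi]

/-- Union of sets of size `r` with pairwise intersections `≤ x` is large (nat version). -/
lemma union_lb {α ι : Type*} [DecidableEq α] [DecidableEq ι] (r x : ℕ)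
    (s : Finset ι) (A : ι → Finset α)
    (hcard : ∀ j ∈ s, (A j).card = r)
    (hint : ∀ j ∈ s, ∀ j' ∈ s, j ≠ j' → ((A j) ∩ (A j')).card ≤ x) :
    ∑ k ∈ Finset.range s.card, (r - k * x) ≤ (s.biUnion A).card := by
  classical
  induction s using Finset.cons_induction with
  | empty => simp
  | cons a s' ha ih =>
    rw [Finset.card_cons, Finset.sum_range_succ, Finset.cons_eq_insert,
      Finset.biUnion_insert]
    have h1 : (A a ∩ s'.biUnion A).card ≤ s'.card * x := by
      have : A a ∩ s'.biUnion A = s'.biUnion (fun b => A a ∩ A b) := by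
        ext m; simp [Finset.mem_biUnion]; tauto
      rw [this]
      calc (s'.biUnion fun b => A a ∩ A b).card ≤ ∑ b ∈ s', (A a ∩ A b).card :=
            Finset.card_biUnion_le
        _ ≤ ∑ _b ∈ s', x := by
            refine Finset.sum_le_sum fun b hb => ?_
            exact hint a (Finset.mem_cons_self _ _) b (Finset.mem_cons_of_mem hb)
              (fun h => ha (h ▸ hb))
        _ = s'.card * x := by rw [Finset.sum_const, smul_eq_mul]
    have h2 : r - s'.card * x ≤ (A a \ s'.biUnion A).card := by
      have := Finset.card_sdiff_add_card_inter (A a) (s'.biUnion A)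
      have h5 := hcard a (Finset.mem_cons_self _ _)
      omega
    have h3 : (A a \ s'.biUnion A).card + (s'.biUnion A).card = (A a ∪ s'.biUnion A).card := by
      rw [← Finset.card_union_of_disjoint (Finset.sdiff_disjoint), Finset.sdiff_union_self_eq_union]
    have h4 := ih (fun j hj => hcard j (Finset.mem_cons_of_mem hj))
      (fun j hj j' hj' hne => hint j (Finset.mem_cons_of_mem hj) j' (Finset.mem_cons_of_mem hj') hne)
    omega

lemma sPar_mul_le (r x : ℕ) (hx : 1 ≤ x) {j k : ℕ} (hk : k + 1 ≤ sPar r j x) :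
    k * x ≤ r := by
  have h1 : k ≤ r / x := by
    unfold sPar at hk
    omega
  calc k * x ≤ (r / x) * x := Nat.mul_le_mul_right x h1
    _ ≤ r := Nat.div_mul_le_self r x

lemma Nlow_nonneg (r j x : ℕ) (hx : 1 ≤ x) : 0 ≤ Nlow r j x := by
  unfold Nlow
  rcases Nat.eq_zero_or_pos (sPar r j x) with h | h
  · rw [h]; norm_num
  · have hkx : (sPar r j x - 1) * x ≤ r := sPar_mul_le r x hx (j := j) (by omega)
    have h1 : ((sPar r j x : ℚ) - 1) * x ≤ r := by
      have : ((sPar r j x - 1 : ℕ) : ℚ) * (x : ℚ) ≤ (r : ℚ) := by exact_mod_cast hkx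
      rw [Nat.cast_sub h] at this
      push_cast at this ⊢
      linarith
    have h2 : (0:ℚ) ≤ (sPar r j x : ℚ) := by positivity
    have h3 : (0:ℚ) < (sPar r j x : ℚ) := by exact_mod_cast h
    nlinarith

/-- Key cast identity: the truncated-sub sum equals `Nlow` in `ℚ`. -/
lemma sum_eq_Nlow (r j x : ℕ) (hx : 1 ≤ x) (hj : 1 ≤ j) :
    ((∑ k ∈ Finset.range (sPar r j x), (r - k * x) : ℕ) : ℚ) = Nlow r j x := by
  set m := sPar r j x with hm
  have hm1 : 1 ≤ m := le_min hj (Nat.succ_le_succ (Nat.zero_le _))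
  have hcast : ((∑ k ∈ Finset.range m, (r - k * x) : ℕ) : ℚ)
      = ∑ k ∈ Finset.range m, ((r : ℚ) - k * x) := by
    rw [Nat.cast_sum]
    refine Finset.sum_congr rfl fun k hk => ?_
    rw [Finset.mem_range] at hk
    have hkr : k * x ≤ r := sPar_mul_le r x hx (j := j) (by omega)
    rw [Nat.cast_sub hkr]
    push_cast; ring
  rw [hcast, Finset.sum_sub_distrib, Finset.sum_const, Finset.card_range, nsmul_eq_mul]
  have hgauss : (∑ k ∈ Finset.range m, (k : ℚ)) = m * (m - 1) / 2 := by
    have h2 := Finset.sum_range_id_mul_two m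
    have : ((∑ k ∈ Finset.range m, k : ℕ) : ℚ) * 2 = (m : ℚ) * ((m - 1 : ℕ) : ℚ) := by
      exact_mod_cast congrArg (Nat.cast (R := ℚ)) h2
    rw [Nat.cast_sub hm1] at this
    push_cast at this
    linarith
  rw [← Finset.sum_mul, hgauss]
  unfold Nlow
  rw [← hm]
  ring

/-- `Nlow` lower-bounds the cardinality of the union. -/
lemma Nlow_le_card_biUnion {α : Type*} [DecidableEq α] (r x : ℕ) (hx : 1 ≤ x)
    (T : Finset (Fin t)) (hT : T.Nonempty) (A : Fin t → Finset α)
    (hcard : ∀ j, (A j).card = r)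
    (hint : ∀ j j', j ≠ j' → ((A j) ∩ (A j')).card ≤ x) :
    Nlow r T.card x ≤ ((T.biUnion A).card : ℚ) := by
  obtain ⟨T', hT'sub, hT'card⟩ := T.exists_subset_card_eq (n := sPar r T.card x)
    (Nat.min_le_left _ _)
  have h1 := union_lb r x T' A (fun j _ => hcard j)
    (fun j _ j' _ hne => hint j j' hne)
  rw [hT'card] at h1
  have h2 : (T'.biUnion A).card ≤ (T.biUnion A).card :=
    Finset.card_le_card (Finset.biUnion_subset_biUnion_of_subset_left A hT'sub)
  have hj : 1 ≤ T.card := hT.card_pos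
  calc Nlow r T.card x = ((∑ k ∈ Finset.range (sPar r T.card x), (r - k * x) : ℕ) : ℚ) :=
        (sum_eq_Nlow r T.card x hx hj).symm
    _ ≤ ((T.biUnion A).card : ℚ) := by exact_mod_cast le_trans h1 h2

/-- Per-vertex count: the number of permutations for which `i` is "good". -/
lemma key_count (r x : ℕ) (hx : 1 ≤ x)
    (i : Fin n) (A : Fin t → Finset (Fin n))
    (hnotin : ∀ j, i ∉ A j)
    (hcard : ∀ j, (A j).card = r)
    (hint : ∀ j j', j ≠ j' → ((A j) ∩ (A j')).card ≤ x) :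
    (Nat.factorial n : ℚ) * fLRC r t x ≤
      (((Finset.univ : Finset (Equiv.Perm (Fin n))).filter
        (fun π => ∃ j : Fin t, ∀ m ∈ A j, π m < π i)).card : ℚ) := by
  have hunion : ((Finset.univ : Finset (Equiv.Perm (Fin n))).filter
        (fun π => ∃ j : Fin t, ∀ m ∈ A j, π m < π i))
      = (Finset.univ : Finset (Fin t)).biUnion (fun j => Ev i (A j)) := by
    ext π
    simp [Ev, Finset.mem_biUnion]
  set P := ((Finset.univ : Finset (Fin t)).powerset.filter (·.Nonempty)) with hP
  have hinf : ∀ (T : Finset (Fin t)) (hT : T.Nonempty),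
      T.inf' hT (fun j => Ev i (A j)) = Ev i (T.biUnion A) := by
    intro T hT
    ext π
    simp only [Finset.mem_inf', Ev, Finset.mem_filter, Finset.mem_univ, true_and,
      Finset.mem_biUnion]
    constructor
    · rintro h m ⟨j, hj, hm⟩
      exact h j hj m hm
    · intro h j hj m hm
      exact h m ⟨j, hj, hm⟩
  have hIE := Finset.inclusion_exclusion_card_biUnion
    (Finset.univ : Finset (Fin t)) (fun j => Ev i (A j))
  have hQ : (((Finset.univ : Finset (Fin t)).biUnion (fun j => Ev i (A j))).card : ℚ)
      = ∑ T ∈ P, (-1 : ℚ) ^ (T.card + 1) * ((Ev i (T.biUnion A)).card : ℚ) := by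
    have h0 := congrArg (fun z : ℤ => (z : ℚ)) hIE
    push_cast at h0
    rw [h0]
    rw [← Finset.sum_coe_sort P
      (fun T => (-1 : ℚ) ^ (T.card + 1) * ((Ev i (T.biUnion A)).card : ℚ))]
    refine Finset.sum_congr rfl fun T _ => ?_
    rw [hinf T.1 (Finset.mem_filter.1 T.2).2]
  have hEvval : ∀ T ∈ P, ((Ev i (T.biUnion A)).card : ℚ)
      = (Nat.factorial n : ℚ) / (((T.biUnion A).card : ℚ) + 1) := by
    intro T _
    have hiB : i ∉ T.biUnion A := by
      rw [Finset.mem_biUnion]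
      rintro ⟨j, _, hj⟩
      exact hnotin j hj
    have hmul := Ev_card_mul i (T.biUnion A) hiB
    have hpos : (((T.biUnion A).card : ℚ) + 1) ≠ 0 := by positivity
    rw [eq_div_iff hpos]
    exact_mod_cast hmul
  set LB : ℕ → ℚ := fun j => if Odd j then (Nat.factorial n : ℚ) / ((j : ℚ) * (r : ℚ) + 1)
      else -((Nat.factorial n : ℚ) / (Nlow r j x + 1)) with hLB
  have hbound : ∀ T ∈ P, LB T.card
      ≤ (-1 : ℚ) ^ (T.card + 1) * ((Ev i (T.biUnion A)).card : ℚ) := by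
    intro T hT
    have hTne : T.Nonempty := (Finset.mem_filter.1 hT).2
    rw [hEvval T hT]
    have hfac : (0:ℚ) ≤ (Nat.factorial n : ℚ) := by positivity
    rcases Nat.even_or_odd T.card with he | ho
    · -- even case
      rw [hLB]
      simp only [Nat.not_odd_iff_even.2 he, if_false]
      rw [Odd.neg_one_pow (Even.add_one he), neg_one_mul, neg_le_neg_iff]
      have hNl : Nlow r T.card x ≤ ((T.biUnion A).card : ℚ) :=
        Nlow_le_card_biUnion r x hx T hTne A hcard hint
      have hNpos : (0:ℚ) ≤ Nlow r T.card x := Nlow_nonneg r T.card x hx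
      gcongr
    · -- odd case
      rw [hLB]
      simp only [ho, if_true]
      rw [Even.neg_one_pow (Odd.add_one ho), one_mul]
      have hb : ((T.biUnion A).card : ℚ) ≤ (T.card : ℚ) * (r : ℚ) := by
        have : (T.biUnion A).card ≤ T.card * r := by
          calc (T.biUnion A).card ≤ ∑ j ∈ T, (A j).card := Finset.card_biUnion_le
            _ = T.card * r := by
                rw [Finset.sum_congr rfl (fun j _ => hcard j), Finset.sum_const, smul_eq_mul]
        exact_mod_cast this
      have hbpos : (0:ℚ) ≤ ((T.biUnion A).card : ℚ) := by positivity
      gcongr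
  -- the sum of the lower bounds equals n! * fLRC
  have hsum : ∑ T ∈ P, LB T.card = (Nat.factorial n : ℚ) * fLRC r t x := by
    have hsplit : ∑ T ∈ P, LB T.card
        = (∑ T ∈ (Finset.univ : Finset (Fin t)).powerset, LB T.card) - LB 0 := by
      have h1 := Finset.sum_filter_add_sum_filter_not
        ((Finset.univ : Finset (Fin t)).powerset) (·.Nonempty) (fun T => LB T.card)
      have h2 : (Finset.univ : Finset (Fin t)).powerset.filter (fun T => ¬ T.Nonempty)
          = {∅} := by
        ext T
        simp [Finset.not_nonempty_iff_eq_empty]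
      rw [h2, Finset.sum_singleton, Finset.card_empty] at h1
      rw [hP]
      linarith
    have hpow : ∑ T ∈ (Finset.univ : Finset (Fin t)).powerset, LB T.card
        = ∑ j ∈ Finset.range (t+1), (t.choose j) • LB j := by
      rw [Finset.sum_powerset]
      simp only [Finset.card_univ, Fintype.card_fin]
      exact Finset.sum_congr rfl fun j _ => Finset.sum_powersetCard j Finset.univ LB
        |>.trans (by simp [Finset.card_univ])
    have hIcc : Finset.range (t+1) = insert 0 (Finset.Icc 1 t) := by
      ext k
      simp only [Finset.mem_range, Finset.mem_insert, Finset.mem_Icc]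
      omega
    have h0notin : (0:ℕ) ∉ Finset.Icc 1 t := by simp
    rw [hsplit, hpow, hIcc, Finset.sum_insert h0notin, Nat.choose_zero_right, one_smul,
      add_sub_cancel_left]
    unfold fLRC
    rw [mul_sub, Finset.mul_sum, Finset.mul_sum, ← Finset.sum_sub_distrib]
    refine Finset.sum_congr rfl fun j hj => ?_
    rcases Nat.even_or_odd j with he | ho
    · rw [hLB]
      simp only [Nat.not_odd_iff_even.2 he, if_false, he, if_true]
      rw [nsmul_eq_mul]
      ring
    · rw [hLB]
      simp only [ho, if_true, Nat.not_even_iff_odd.2 ho, if_false]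
      unfold Nbar
      push_cast
      rw [nsmul_eq_mul]
      ring
  calc (Nat.factorial n : ℚ) * fLRC r t x = ∑ T ∈ P, LB T.card := hsum.symm
    _ ≤ ∑ T ∈ P, (-1 : ℚ) ^ (T.card + 1) * ((Ev i (T.biUnion A)).card : ℚ) :=
        Finset.sum_le_sum hbound
    _ = (((Finset.univ : Finset (Fin t)).biUnion (fun j => Ev i (A j))).card : ℚ) := hQ.symm
    _ = _ := by rw [hunion]

/-- if each coordinate `i ∈ [n]` has `t` recovering sets
`R_i^1, …, R_i^t ⊆ [n] \ {i}` of cardinality `r`, any two intersecting in at most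
`x ≥ 1` elements, then there is a subset `U ⊆ [n]` with `|U| ≥ n·f(r,t,x)` such that
every nonempty `U' ⊆ U` contains a vertex `v` some of whose recovering sets avoids
`U'` (i.e. in the induced recovery subgraph some vertex misses a color). -/
theorem exists_large_set_missing_color
    (n r t x : ℕ) (hn : 0 < n) (hr : 0 < r) (ht : 0 < t) (hx : 1 ≤ x)
    (R : Fin n → Fin t → Finset (Fin n))
    (hnotin : ∀ i j, i ∉ R i j)
    (hcard : ∀ i j, (R i j).card = r)
    (hint : ∀ i, ∀ j j', j ≠ j' → ((R i j) ∩ (R i j')).card ≤ x) :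
    ∃ U : Finset (Fin n), (n : ℚ) * fLRC r t x ≤ (U.card : ℚ) ∧
      ∀ U' ⊆ U, U'.Nonempty → ∃ v ∈ U', ∃ j : Fin t, (R v j) ∩ U' = ∅ := by
  -- the random set
  set Us : Equiv.Perm (Fin n) → Finset (Fin n) := fun π =>
    Finset.univ.filter (fun i => ∃ j : Fin t, ∀ m ∈ R i j, π m < π i) with hUs
  -- expected size bound
  have hswap : ∑ π : Equiv.Perm (Fin n), ((Us π).card : ℚ)
      = ∑ i : Fin n, (((Finset.univ : Finset (Equiv.Perm (Fin n))).filter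
          (fun π => ∃ j : Fin t, ∀ m ∈ R i j, π m < π i)).card : ℚ) := by
    simp only [hUs, Finset.card_filter]
    push_cast
    rw [Finset.sum_comm]
  have hbig : (Nat.factorial n : ℚ) * ((n : ℚ) * fLRC r t x)
      ≤ ∑ π : Equiv.Perm (Fin n), ((Us π).card : ℚ) := by
    rw [hswap]
    have : ∀ i : Fin n, (Nat.factorial n : ℚ) * fLRC r t x
        ≤ (((Finset.univ : Finset (Equiv.Perm (Fin n))).filter
          (fun π => ∃ j : Fin t, ∀ m ∈ R i j, π m < π i)).card : ℚ) :=
      fun i => key_count r x hx i (R i) (hnotin i) (hcard i) (hint i)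
    calc (Nat.factorial n : ℚ) * ((n : ℚ) * fLRC r t x)
        = ∑ _i : Fin n, (Nat.factorial n : ℚ) * fLRC r t x := by
          rw [Finset.sum_const, Finset.card_univ, Fintype.card_fin, nsmul_eq_mul]; ring
      _ ≤ _ := Finset.sum_le_sum fun i _ => this i
  -- average argument
  have hnonempty : (Finset.univ : Finset (Equiv.Perm (Fin n))).Nonempty :=
    Finset.univ_nonempty
  have hexists : ∃ π : Equiv.Perm (Fin n), (n : ℚ) * fLRC r t x ≤ ((Us π).card : ℚ) := by
    by_contra hcon
    push_neg at hcon
    have : ∑ π : Equiv.Perm (Fin n), ((Us π).card : ℚ)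
        < ∑ _π : Equiv.Perm (Fin n), (n : ℚ) * fLRC r t x :=
      Finset.sum_lt_sum_of_nonempty hnonempty (fun π _ => hcon π)
    rw [Finset.sum_const, Finset.card_univ, Fintype.card_perm, Fintype.card_fin,
      nsmul_eq_mul] at this
    linarith
  obtain ⟨π, hπ⟩ := hexists
  refine ⟨Us π, hπ, ?_⟩
  intro U' hU'sub hU'ne
  obtain ⟨v, hvU', hvmin⟩ := U'.exists_min_image (fun u => π u) hU'ne
  have hvU : v ∈ Us π := hU'sub hvU'
  rw [hUs, Finset.mem_filter] at hvU
  obtain ⟨_, j, hj⟩ := hvU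
  refine ⟨v, hvU', j, ?_⟩
  rw [Finset.eq_empty_iff_forall_notMem]
  intro m hm
  rw [Finset.mem_inter] at hm
  exact absurd (hj m hm.1) (not_lt.2 (hvmin m hm.2))
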